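/- arXiv:2203.15094 — 2 statements merged into one kernel-verified Lean document; each statement's English description precedes it below -/
import Mathlib

section
/- Let M = (S, ρ) be a matroid scheme, let x, y ∈ S, and suppose u is a flat of M that is a minimal upper bound of cl(x) and cl(y) within the poset of flats F(M). Then there exists v ∈ x∨y (a minimal upper bound of x and y in S) such that cl(v) = u. -/
/-- The set of minimal upper bounds of `x` and `y` (denoted `x ∨ y` in the paper). -/
def mub {S : Type*} [PartialOrder S] (x y : S) : Set S :=
  {u | x ≤ u ∧ y ≤ u ∧ ∀ v, x ≤ v → y ≤ v → v ≤ u → v = u}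

/-- The set of maximal lower bounds of `x` and `y` (denoted `x ∧ y` in the paper). -/
def mlb {S : Type*} [PartialOrder S] (x y : S) : Set S :=
  {l | l ≤ x ∧ l ≤ y ∧ ∀ m, m ≤ x → m ≤ y → l ≤ m → m = l}

/-- The set of minimal upper bounds of a subset `T`. -/
def mubSet {S : Type*} [PartialOrder S] (T : Set S) : Set S :=
  {u | (∀ t ∈ T, t ≤ u) ∧ ∀ v, (∀ t ∈ T, t ≤ v) → v ≤ u → v = u}

/-- The number of atoms below `x`, i.e. `|x|`, the rank of `x` in a simplicial poset. -/
noncomputable def natRank {S : Type*} [PartialOrder S] [OrderBot S] (x : S) : ℕ :=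
  Nat.card {a : S // IsAtom a ∧ a ≤ x}

/-- A finite bounded-below poset is simplicial if every lower interval is isomorphic to
the Boolean lattice of subsets of the set of atoms below. -/
def IsSimplicialPoset (S : Type*) [PartialOrder S] [OrderBot S] [Fintype S] : Prop :=
  ∀ x : S, Nonempty (Set.Iic x ≃o Set {a : S // IsAtom a ∧ a ≤ x})

/-- A matroid scheme: a rank function `ρ` on a finite simplicial poset `S`
satisfying (M1)–(M5). -/
structure IsMatroidScheme {S : Type*} [PartialOrder S] [OrderBot S] [Fintype S]
    (ρ : S → ℕ) : Prop where
  simplicial : IsSimplicialPoset S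
  M1 : ∀ x : S, ρ x ≤ natRank x
  M2 : ∀ ⦃x y : S⦄, x ≤ y → ρ x ≤ ρ y
  M3 : ∀ x y u l : S, u ∈ mub x y → l ∈ mlb x y → ρ u + ρ l ≤ ρ x + ρ y
  M4 : ∀ x y l : S, l ∈ mlb x y → ρ x = ρ l → (mub x y).Nonempty
  M5 : ∀ x y : S, ρ x < ρ y →
    ∃ a : S, IsAtom a ∧ a ≤ y ∧ ¬ a ≤ x ∧ (mub x a).Nonempty

/-- `cl` is the closure operator of a matroid scheme `(S, ρ)`:
`cl x` is the greatest element above `x` of the same rank. -/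
def IsClosureFun {S : Type*} [PartialOrder S] (ρ : S → ℕ) (cl : S → S) : Prop :=
  ∀ x : S, x ≤ cl x ∧ ρ (cl x) = ρ x ∧ ∀ y : S, x ≤ y → ρ y = ρ x → y ≤ cl x

/-- The bases of a matroid scheme: the maximal independent elements. -/
def Bases {S : Type*} [PartialOrder S] [OrderBot S] (ρ : S → ℕ) : Set S :=
  {x | ρ x = natRank x ∧ ∀ w, ρ w = natRank w → x ≤ w → w = x}

/-- The circuits of a matroid scheme: the minimal dependent elements. -/
def Circuits {S : Type*} [PartialOrder S] [OrderBot S] (ρ : S → ℕ) : Set S :=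
  {x | ρ x < natRank x ∧ ∀ y, ρ y < natRank y → y ≤ x → y = x}

/-- `c` is the complement `x ∖ a` of `a` in the Boolean lattice `S_{≤ x}`. -/
def IsComplementIn {S : Type*} [PartialOrder S] [OrderBot S] (c a x : S) : Prop :=
  c ≤ x ∧ a ≤ x ∧ (∀ l : S, l ≤ c → l ≤ a → l = ⊥) ∧
    (∀ u : S, u ≤ x → c ≤ u → a ≤ u → u = x)

/-- The rank of a matroid scheme: the common value of `ρ` on maximal elements
(equal to the maximum value of `ρ`). -/
noncomputable def schemeRank {S : Type*} [Fintype S] (ρ : S → ℕ) : ℕ :=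
  sSup (Set.range ρ)

/-- The Tutte polynomial of a matroid scheme, as a two-variable integer function. -/
noncomputable def tutte {S : Type*} [PartialOrder S] [OrderBot S] [Fintype S]
    (ρ : S → ℕ) (x y : ℤ) : ℤ :=
  ∑ w : S, (x - 1) ^ (schemeRank ρ - ρ w) * (y - 1) ^ (natRank w - ρ w)

/-- An element of a poset is an order-atom if it covers a global minimum. -/
def OrdAtom {P : Type*} [PartialOrder P] (a : P) : Prop :=
  ∃ b : P, (∀ z : P, b ≤ z) ∧ b ⋖ a

/-- A partial order is a geometric lattice: it is bounded below, every pair has a least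
upper bound and greatest lower bound, it is atomistic, and it is (upper) semimodular. -/
def IsGeomLatOrder (P : Type*) [PartialOrder P] : Prop :=
  (∃ b : P, ∀ x : P, b ≤ x) ∧
  (∀ x y : P, ∃ u : P, IsLUB {x, y} u) ∧
  (∀ x y : P, ∃ l : P, IsGLB {x, y} l) ∧
  (∀ x : P, IsLUB {a : P | OrdAtom a ∧ a ≤ x} x) ∧
  (∀ x y m j : P, IsGLB {x, y} m → IsLUB {x, y} j → m ⋖ x → y ⋖ j)

/-- A geometric poset: a finite bounded-below poset with rank function `rk`
satisfying (G1) and (G2). -/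
def IsGeometricPoset (P : Type*) [PartialOrder P] [OrderBot P] [Fintype P]
    (rk : P → ℕ) : Prop :=
  rk ⊥ = 0 ∧
  (∀ ⦃x y : P⦄, x ≤ y → rk x ≤ rk y) ∧
  (∀ x y : P, x ⋖ y → rk y = rk x + 1) ∧
  (∀ m : P, IsMax m → IsGeomLatOrder (Set.Iic m)) ∧
  (∀ (x : P) (A : Set P), (∀ a ∈ A, IsAtom a) →
    ∀ y ∈ mubSet A, rk x < rk y → rk y = Nat.card A →
      ∃ a ∈ A, ¬ a ≤ x ∧ ∃ w : P, x ≤ w ∧ a ≤ w)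


/-!
Choose `v ∈ x ∨ y` below `u`. In a matroid scheme the closure is monotone and its values are
exactly the flats, so `cl v` is a flat lying above `cl x` and `cl y` and below `u`; minimality
of `u` among such flats forces `cl v = u`.
-/

section FinitePoset

variable {S : Type*} [PartialOrder S] [Finite S]

theorem exists_mem_mlb_ge {v a b : S} (ha : v ≤ a) (hb : v ≤ b) : ∃ l ∈ mlb a b, v ≤ l := by
  obtain ⟨l, hvl, hmax⟩ :=
    Finite.exists_le_maximal (p := fun l => v ≤ l ∧ l ≤ a ∧ l ≤ b) ⟨le_rfl, ha, hb⟩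
  exact ⟨l, ⟨hmax.prop.2.1, hmax.prop.2.2,
    fun m hma hmb hlm => (hmax.eq_of_le ⟨hvl.trans hlm, hma, hmb⟩ hlm).symm⟩, hvl⟩

theorem exists_mem_mub_le {x y u : S} (hx : x ≤ u) (hy : y ≤ u) : ∃ v ∈ mub x y, v ≤ u := by
  obtain ⟨v, hvu, hmin⟩ :=
    Finite.exists_le_minimal (p := fun v => x ≤ v ∧ y ≤ v ∧ v ≤ u) ⟨hx, hy, le_rfl⟩
  exact ⟨v, ⟨hmin.prop.1, hmin.prop.2.1,
    fun w hxw hyw hwv => (hmin.eq_of_ge ⟨hxw, hyw, hwv.trans hvu⟩ hwv).symm⟩, hvu⟩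

end FinitePoset

theorem IsClosureFun.cl_cl {S : Type*} [PartialOrder S] {ρ : S → ℕ} {cl : S → S}
    (hcl : IsClosureFun ρ cl) (v : S) : cl (cl v) = cl v := by
  obtain ⟨hv_le, hv_rank, hv_max⟩ := hcl v
  obtain ⟨hclv_le, hclv_rank, -⟩ := hcl (cl v)
  exact le_antisymm (hv_max _ (hv_le.trans hclv_le) (by rw [hclv_rank, hv_rank])) hclv_le

namespace IsMatroidScheme

variable {S : Type*} [PartialOrder S] [OrderBot S] [Fintype S] {ρ : S → ℕ} {cl : S → S}

theorem cl_le_of_le_of_cl_eq (h : IsMatroidScheme ρ) (hcl : IsClosureFun ρ cl) {v u : S}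
    (hvu : v ≤ u) (hu : cl u = u) : cl v ≤ u := by
  obtain ⟨hv_le, hv_rank, -⟩ := hcl v
  obtain ⟨l, hl, hvl⟩ := exists_mem_mlb_ge hv_le hvu
  have hl_rank : ρ (cl v) = ρ l := le_antisymm (hv_rank ▸ h.M2 hvl) (h.M2 hl.1)
  -- (M4) joins `cl v` and `u`; submodularity (M3) then keeps the join at the rank of `u`.
  obtain ⟨m, hm⟩ := h.M4 (cl v) u l hl hl_rank
  have hm_rank : ρ m = ρ u :=
    le_antisymm (by linarith [h.M3 (cl v) u m l hm hl]) (h.M2 hm.2.1)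
  exact hm.1.trans (hu ▸ (hcl u).2.2 m hm.2.1 hm_rank)

theorem cl_mono (h : IsMatroidScheme ρ) (hcl : IsClosureFun ρ cl) {v w : S} (hvw : v ≤ w) :
    cl v ≤ cl w :=
  h.cl_le_of_le_of_cl_eq hcl (hvw.trans (hcl w).1) (hcl.cl_cl w)

end IsMatroidScheme

/-- Lemma 5.7: if `u` is a minimal upper bound of `cl x` and `cl y` in the poset
of flats, then `u = cl v` for some minimal upper bound `v` of `x` and `y` in `S`. -/
theorem statement5 {S : Type*} [PartialOrder S] [OrderBot S] [Fintype S]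
    (ρ : S → ℕ) (h : IsMatroidScheme ρ) (cl : S → S) (hcl : IsClosureFun ρ cl)
    (x y u : S) (hu : cl u = u) (hxu : cl x ≤ u) (hyu : cl y ≤ u)
    (humin : ∀ v : S, cl v = v → cl x ≤ v → cl y ≤ v → v ≤ u → v = u) :
    ∃ v ∈ mub x y, cl v = u := by
  obtain ⟨v, hv, hvu⟩ := exists_mem_mub_le ((hcl x).1.trans hxu) ((hcl y).1.trans hyu)
  exact ⟨v, hv, humin (cl v) (hcl.cl_cl v) (h.cl_mono hcl hv.1) (h.cl_mono hcl hv.2.1)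
    (h.cl_le_of_le_of_cl_eq hcl hvu hu)⟩
end

section
/- Let M = (S, ρ) be a matroid scheme and a an atom of S. The following are equivalent: (1) ρ(a) = 0; (2) a ≤ x for every flat x of M; (3) a ≤ m for every maximal element m of S, and a ≰ b for every basis b ∈ B(M). -/
/-!
A loop `a` (an atom with `ρ a = 0`) lies below every closure `cl x`: if `a ≰ x` then `⊥` is the
meet of `a` and `x`, so (M4) provides some `u ∈ a ∨ x`, and (M3) gives `ρ u ≤ ρ x`, whence
`u ≤ cl x`. Conversely `cl ⊥` is a flat of rank `0`. A loop lies below no basis `b`: (M3) applied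
to `a` and its complement `c` in the Boolean interval below `b` gives `|b| = ρ b ≤ ρ c ≤ |c| < |b|`.
Finally an atom that is not a loop is independent, hence lies below a basis.
-/

section SimplicialPoset

variable {S : Type*} [PartialOrder S] [OrderBot S]

theorem natRank_eq_ncard (x : S) : natRank x = {a : S | IsAtom a ∧ a ≤ x}.ncard := by
  rw [natRank, ← Nat.card_coe_set_eq]
  rfl

theorem natRank_bot : natRank (⊥ : S) = 0 := by
  have : {a : S | IsAtom a ∧ a ≤ ⊥} = ∅ :=
    Set.eq_empty_of_forall_notMem fun b hb => hb.1.1 (le_bot_iff.1 hb.2)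
  rw [natRank_eq_ncard, this, Set.ncard_empty]

theorem natRank_of_isAtom {a : S} (ha : IsAtom a) : natRank a = 1 := by
  have : {b : S | IsAtom b ∧ b ≤ a} = {a} := by
    ext b
    refine ⟨fun ⟨hb, hba⟩ => (ha.le_iff_eq hb.1).1 hba, ?_⟩
    rintro rfl
    exact ⟨ha, le_rfl⟩
  rw [natRank_eq_ncard, this, Set.ncard_singleton]

theorem natRank_lt_natRank [Finite S] {a c x : S} (ha : IsAtom a) (hax : a ≤ x)
    (hac : ¬ a ≤ c) (hcx : c ≤ x) : natRank c < natRank x := by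
  rw [natRank_eq_ncard, natRank_eq_ncard]
  exact Set.ncard_lt_ncard ⟨fun b hb => ⟨hb.1, hb.2.trans hcx⟩, fun h => hac (h ⟨ha, hax⟩).2⟩

theorem IsSimplicialPoset.exists_isComplementIn [Fintype S] (hS : IsSimplicialPoset S)
    {y x : S} (hyx : y ≤ x) : ∃ c, IsComplementIn c y x := by
  obtain ⟨e⟩ := hS x
  set Y : Set.Iic x := ⟨y, hyx⟩
  set c := e.symm (e Y)ᶜ
  have hc : e c = (e Y)ᶜ := e.apply_symm_apply _
  refine ⟨c, c.2, hyx, fun l hlc hly => ?_, fun u hux hcu hyu => ?_⟩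
  · have hL : e ⟨l, hlc.trans c.2⟩ ≤ e ⊥ := by
      rw [e.map_bot, ← compl_inf_self (e Y), ← hc]
      exact le_inf (e.monotone (Subtype.mk_le_mk.2 hlc)) (e.monotone (Subtype.mk_le_mk.2 hly))
    exact congrArg Subtype.val (le_bot_iff.1 (e.le_iff_le.1 hL))
  · have hU : e ⊤ ≤ e ⟨u, hux⟩ := by
      rw [e.map_top, ← compl_sup_eq_top (x := e Y), ← hc]
      exact sup_le (e.monotone (Subtype.mk_le_mk.2 hcu)) (e.monotone (Subtype.mk_le_mk.2 hyu))
    exact congrArg Subtype.val (top_le_iff.1 (e.le_iff_le.1 hU))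

theorem IsComplementIn.mem_mub {c y x : S} (h : IsComplementIn c y x) : x ∈ mub c y :=
  ⟨h.1, h.2.1, fun v hcv hyv hvx => h.2.2.2 v hvx hcv hyv⟩

theorem IsComplementIn.bot_mem_mlb {c y x : S} (h : IsComplementIn c y x) : ⊥ ∈ mlb c y :=
  ⟨bot_le, bot_le, fun l hlc hly _ => h.2.2.1 l hlc hly⟩

theorem IsComplementIn.natRank_lt [Finite S] {c a x : S} (h : IsComplementIn c a x)
    (ha : IsAtom a) : natRank c < natRank x :=
  natRank_lt_natRank ha h.2.1 (fun hac => ha.1 (h.2.2.1 a hac le_rfl)) h.1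

theorem IsAtom.bot_mem_mlb {a x : S} (ha : IsAtom a) (hax : ¬ a ≤ x) : ⊥ ∈ mlb a x :=
  ⟨bot_le, bot_le, fun l hla hlx _ =>
    (ha.le_iff.1 hla).resolve_right (by rintro rfl; exact hax hlx)⟩

end SimplicialPoset

namespace IsClosureFun

variable {S : Type*} [PartialOrder S] {ρ : S → ℕ} {cl : S → S}

theorem closure_closure (hcl : IsClosureFun ρ cl) (x : S) : cl (cl x) = cl x :=
  le_antisymm
    ((hcl x).2.2 _ ((hcl x).1.trans (hcl (cl x)).1) ((hcl (cl x)).2.1.trans (hcl x).2.1))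
    (hcl (cl x)).1

theorem closure_eq_of_isMax (hcl : IsClosureFun ρ cl) {m : S} (hm : IsMax m) : cl m = m :=
  (hm (hcl m).1).antisymm (hcl m).1

end IsClosureFun

theorem exists_mem_bases_ge {S : Type*} [PartialOrder S] [OrderBot S] [Finite S] {ρ : S → ℕ}
    {x : S} (hx : ρ x = natRank x) : ∃ b ∈ Bases ρ, x ≤ b := by
  obtain ⟨b, hxb, hb, hmax⟩ := Finite.exists_le_maximal (p := fun w => ρ w = natRank w) hx
  exact ⟨b, ⟨hb, fun w hw hbw => (hmax hw hbw).antisymm hbw⟩, hxb⟩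

namespace IsMatroidScheme

variable {S : Type*} [PartialOrder S] [OrderBot S] [Fintype S] {ρ : S → ℕ}

theorem rank_bot (h : IsMatroidScheme ρ) : ρ ⊥ = 0 :=
  Nat.le_zero.1 (natRank_bot (S := S) ▸ h.M1 ⊥)

theorem rank_le_add_of_isComplementIn (h : IsMatroidScheme ρ) {c y x : S}
    (hc : IsComplementIn c y x) : ρ x ≤ ρ c + ρ y := by
  simpa [h.rank_bot] using h.M3 c y x ⊥ hc.mem_mub hc.bot_mem_mlb

theorem le_closure_of_rank_eq_zero (h : IsMatroidScheme ρ) {cl : S → S}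
    (hcl : IsClosureFun ρ cl) {a : S} (ha : IsAtom a) (h0 : ρ a = 0) (x : S) : a ≤ cl x := by
  by_cases hax : a ≤ x
  · exact hax.trans (hcl x).1
  have hbot := ha.bot_mem_mlb hax
  obtain ⟨u, hu⟩ := h.M4 a x ⊥ hbot (h0.trans h.rank_bot.symm)
  have hux : ρ u ≤ ρ x := by simpa [h0, h.rank_bot] using h.M3 a x u ⊥ hu hbot
  exact hu.1.trans ((hcl x).2.2 u hu.2.1 (hux.antisymm (h.M2 hu.2.1)))

theorem rank_eq_zero_of_le_closure_bot (h : IsMatroidScheme ρ) {cl : S → S}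
    (hcl : IsClosureFun ρ cl) {a : S} (ha : a ≤ cl ⊥) : ρ a = 0 :=
  Nat.le_zero.1 ((h.M2 ha).trans_eq ((hcl ⊥).2.1.trans h.rank_bot))

theorem not_le_of_mem_bases_of_rank_eq_zero (h : IsMatroidScheme ρ) {a b : S} (ha : IsAtom a)
    (h0 : ρ a = 0) (hb : b ∈ Bases ρ) : ¬ a ≤ b := by
  intro hab
  obtain ⟨c, hc⟩ := h.simplicial.exists_isComplementIn hab
  refine (hc.natRank_lt ha).not_ge ?_
  calc natRank b = ρ b := hb.1.symm
    _ ≤ ρ c + ρ a := h.rank_le_add_of_isComplementIn hc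
    _ = ρ c := by rw [h0, add_zero]
    _ ≤ natRank c := h.M1 c

theorem rank_eq_zero_of_forall_mem_bases_not_le (h : IsMatroidScheme ρ) {a : S} (ha : IsAtom a)
    (hB : ∀ b ∈ Bases ρ, ¬ a ≤ b) : ρ a = 0 := by
  by_contra h0
  have hind : ρ a = natRank a := by
    have := h.M1 a
    rw [natRank_of_isAtom ha] at this ⊢
    omega
  obtain ⟨b, hb, hab⟩ := exists_mem_bases_ge hind
  exact hB b hb hab

end IsMatroidScheme

/-- Proposition 7.1: characterizations of a loop. -/
theorem statement11 {S : Type*} [PartialOrder S] [OrderBot S] [Fintype S]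
    (ρ : S → ℕ) (h : IsMatroidScheme ρ) (cl : S → S) (hcl : IsClosureFun ρ cl)
    (a : S) (ha : IsAtom a) :
    (ρ a = 0 ↔ ∀ x : S, cl x = x → a ≤ x) ∧
    (ρ a = 0 ↔ ((∀ m : S, IsMax m → a ≤ m) ∧ ∀ b ∈ Bases ρ, ¬ a ≤ b)) := by
  refine ⟨⟨fun h0 x hx => ?_, fun hflat => ?_⟩, ⟨fun h0 => ⟨fun m hm => ?_, fun b hb => ?_⟩, ?_⟩⟩
  · exact hx ▸ h.le_closure_of_rank_eq_zero hcl ha h0 x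
  · exact h.rank_eq_zero_of_le_closure_bot hcl (hflat _ (hcl.closure_closure ⊥))
  · exact hcl.closure_eq_of_isMax hm ▸ h.le_closure_of_rank_eq_zero hcl ha h0 m
  · exact h.not_le_of_mem_bases_of_rank_eq_zero ha h0 hb
  · exact fun ⟨_, hB⟩ => h.rank_eq_zero_of_forall_mem_bases_not_le ha hB
end
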